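/- arXiv:1608.03758 — 2 statements merged into one kernel-verified Lean document; each statement's English description precedes it below -/
import Mathlib

section
/- Let X, Y, Z be complex Banach spaces and let A : X → Y and B : Y → Z be bounded linear operators with B ∘ A = 0. If the quotient vector space ker(B)/range(A) is finite-dimensional, then range(A) is a closed subspace of Y. -/
/-!
Factoring `f` through `E ⧸ ker f` makes it injective without changing its range. A
finite-dimensional algebraic complement of the range is closed, and an injective operator whose
range has a closed complement has closed range, by the open mapping theorem applied to
`(x, g) ↦ f x + g`. For the theorem, apply this to `A` viewed as an operator into the Banach
space `ker B`, whose quotient by the range of `A` is the given finite-dimensional space.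
-/

namespace ContinuousLinearMap

variable {𝕜 E F : Type*} [NontriviallyNormedField 𝕜] [CompleteSpace 𝕜]
  [NormedAddCommGroup E] [NormedSpace 𝕜 E] [CompleteSpace E]
  [NormedAddCommGroup F] [NormedSpace 𝕜 F] [CompleteSpace F]

theorem isClosed_range_of_ker_eq_bot_of_finiteDimensional_quotient (f : E →L[𝕜] F)
    (hker : f.ker = ⊥) [FiniteDimensional 𝕜 (F ⧸ f.range)] : IsClosed (f.range : Set F) := by
  obtain ⟨G, hG⟩ := Submodule.exists_isCompl f.range
  have : FiniteDimensional 𝕜 G := (Submodule.quotientEquivOfIsCompl _ G hG).finiteDimensional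
  exact f.closed_complemented_range_of_isCompl_of_ker_eq_bot G hG G.closed_of_finiteDimensional hker

theorem isClosed_range_of_finiteDimensional_quotient (f : E →L[𝕜] F)
    [FiniteDimensional 𝕜 (F ⧸ f.range)] : IsClosed (f.range : Set F) := by
  have : IsClosed (f.ker : Set E) := f.isClosed_ker
  let g := f.ker.liftQL f le_rfl
  have hrange : g.range = f.range := Submodule.range_liftQ _ _ _
  have : FiniteDimensional 𝕜 (F ⧸ g.range) := hrange ▸ ‹_›
  rw [← hrange]
  exact g.isClosed_range_of_ker_eq_bot_of_finiteDimensional_quotient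
    (Submodule.ker_liftQ_eq_bot _ _ _ le_rfl)

end ContinuousLinearMap

theorem stmt1_general (X Y Z : Type*) [NormedAddCommGroup X] [NormedSpace ℂ X] [CompleteSpace X]
    [NormedAddCommGroup Y] [NormedSpace ℂ Y] [CompleteSpace Y]
    [NormedAddCommGroup Z] [NormedSpace ℂ Z]
    (A : X →L[ℂ] Y) (B : Y →L[ℂ] Z) (hBA : B.comp A = 0)
    (hfin : FiniteDimensional ℂ
      (↥(LinearMap.ker (B : Y →ₗ[ℂ] Z)) ⧸
        Submodule.comap (LinearMap.ker (B : Y →ₗ[ℂ] Z)).subtype (LinearMap.range (A : X →ₗ[ℂ] Y)))) :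
    IsClosed (LinearMap.range (A : X →ₗ[ℂ] Y) : Set Y) := by
  have hK : IsClosed (B.ker : Set Y) := B.isClosed_ker
  have : CompleteSpace B.ker := hK.completeSpace_coe
  let A' := A.codRestrict B.ker fun x ↦ congr($hBA x)
  have hrange : A'.range = A.range.comap B.ker.subtype := LinearMap.range_codRestrict _ _ _
  have : FiniteDimensional ℂ (B.ker ⧸ A'.range) := hrange ▸ hfin
  have hA : A.range = A'.range.map B.ker.subtype := by
    rw [hrange, Submodule.map_comap_subtype, eq_comm, inf_eq_right]
    exact LinearMap.range_le_ker_iff.2 congr(($hBA : X →ₗ[ℂ] Z))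
  rw [hA, Submodule.map_coe]
  exact hK.isClosedEmbedding_subtypeVal.isClosedMap _ A'.isClosed_range_of_finiteDimensional_quotient

/-- Let `X, Y, Z` be complex Banach spaces and `A : X → Y`, `B : Y → Z`
bounded linear operators with `B ∘ A = 0`. If the quotient `ker B / range A` is
finite-dimensional, then `range A` is closed in `Y`. -/
theorem stmt1 (X Y Z : Type*) [NormedAddCommGroup X] [NormedSpace ℂ X] [CompleteSpace X]
    [NormedAddCommGroup Y] [NormedSpace ℂ Y] [CompleteSpace Y]
    [NormedAddCommGroup Z] [NormedSpace ℂ Z] [CompleteSpace Z]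
    (A : X →L[ℂ] Y) (B : Y →L[ℂ] Z) (hBA : B.comp A = 0)
    (hfin : FiniteDimensional ℂ
      (↥(LinearMap.ker (B : Y →ₗ[ℂ] Z)) ⧸
        Submodule.comap (LinearMap.ker (B : Y →ₗ[ℂ] Z)).subtype (LinearMap.range (A : X →ₗ[ℂ] Y)))) :
    IsClosed (LinearMap.range (A : X →ₗ[ℂ] Y) : Set Y) :=
  stmt1_general X Y Z A B hBA hfin
end

section
/- Let 0 → Xₙ →(dₙ) Xₙ₋₁ → ⋯ → X₁ →(d₁) X₀ → 0 be a complex of complex Banach spaces and bounded linear operators (d_p ∘ d_{p+1} = 0 for all p, with the conventions d₀ = 0 and d_{n+1} = 0), and let 0 ≤ k ≤ n. Suppose that for p = 0, …, k the subspace range(d_{p+1}) is closed and has finite codimension in ker(d_p) (where ker(d₀) = X₀), and that ker(d_p) admits a closed topological complement in X_p for p = 1, …, k+1. Then there exist bounded linear operators h_p : X_p → X_{p+1} for p = 0, …, k and bounded linear projections k_p : X_p → X_p with finite-dimensional range for p = 0, …, k such that, with the convention h₋₁ = 0, for every p = 0, …, k: d_{p+1} ∘ h_p + h_{p−1} ∘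 d_p = Id_{X_p} − k_p, h_p ∘ h_{p−1} = 0, h_p ∘ k_p = 0, k_p ∘ d_{p+1} = 0, d_p ∘ k_p = 0, and k_p ∘ h_{p−1} = 0. -/
/-!
Write `Z_p = ker d_p` for the cycles (`Z_0 = X_0`) and fix bounded projections `P_p` onto them: the
identity for `p = 0`, the given complements otherwise. As `B_p = range d_{p+1}` is closed of finite
codimension in `Z_p`, it has a finite-dimensional complement in `Z_p`; let `κ_p` be the projection
onto it along `B_p`, so that `P_p - κ_p` projects onto `B_p`. By the open mapping theorem `d_{p+1}`
maps `ker P_{p+1}` isomorphically onto `B_p`; with `s_p` the inverse, put `h_p = s_p (P_p - κ_p)`.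
Then `d_{p+1} h_p = P_p - κ_p` and `h_{p-1} d_p = 1 - P_p` add up to `1 - κ_p`, and the remaining
identities hold because `h_{p-1}` takes values in `ker P_p`.
-/

open ContinuousLinearMap

theorem LinearMap.IsProj.map_map {S M F : Type*} [Semiring S] [AddCommMonoid M] [Module S M]
    [FunLike F M M] {m : Submodule S M} {f : F} (hf : LinearMap.IsProj m f) (x : M) :
    f (f x) = f x :=
  hf.map_id _ (hf.map_mem x)

theorem Submodule.ClosedComplemented.exists_isProj {R M : Type*} [Ring R] [AddCommGroup M]
    [Module R M] [TopologicalSpace M] {p : Submodule R M} (hp : p.ClosedComplemented) :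
    ∃ Q : M →L[R] M, LinearMap.IsProj p Q := by
  obtain ⟨f, hf⟩ := hp
  exact ⟨p.subtypeL ∘L f, fun x ↦ (f x).2, fun x hx ↦ congrArg Subtype.val (hf ⟨x, hx⟩)⟩

theorem Submodule.finiteDimensional_quotient_comap_top_subtype {K V : Type*} [DivisionRing K]
    [AddCommGroup V] [Module K V] (R : Submodule K V) [FiniteDimensional K (V ⧸ R)] :
    FiniteDimensional K ((⊤ : Submodule K V) ⧸ R.comap (⊤ : Submodule K V).subtype) :=
  Module.Finite.equiv (Submodule.Quotient.equiv R _ Submodule.topEquiv.symm (by ext; simp))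

section Banach

variable {𝕜 E F G : Type*} [NontriviallyNormedField 𝕜]
  [NormedAddCommGroup E] [NormedSpace 𝕜 E] [NormedAddCommGroup F] [NormedSpace 𝕜 F]
  [NormedAddCommGroup G] [NormedSpace 𝕜 G]

theorem Submodule.exists_proj_along_of_finiteDimensional_quotient [CompleteSpace 𝕜]
    (R : Submodule 𝕜 E) (hR : IsClosed (R : Set E)) [FiniteDimensional 𝕜 (E ⧸ R)] :
    ∃ q : E →L[𝕜] E, (∀ x ∈ R, q x = 0) ∧ (∀ x, x - q x ∈ R) ∧
      FiniteDimensional 𝕜 q.range := by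
  have : IsClosed (R : Set E) := hR
  obtain ⟨σ, hσ⟩ := R.mkQ.exists_rightInverse_of_surjective R.range_mkQ
  let q : E →L[𝕜] E := ⟨σ ∘ₗ R.mkQ, σ.continuous_of_finiteDimensional.comp R.continuous_mkQ⟩
  refine ⟨q, fun x hx ↦ ?_, fun x ↦ ?_, ?_⟩
  · simp [q, (Submodule.Quotient.mk_eq_zero R).2 hx]
  · rw [← Submodule.Quotient.mk_eq_zero R, Submodule.Quotient.mk_sub]
    have : R.mkQ (σ (R.mkQ x)) = R.mkQ x := LinearMap.congr_fun hσ _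
    simpa [q, sub_eq_zero] using this.symm
  · exact Submodule.finiteDimensional_of_le (LinearMap.range_comp_le_range _ _)

theorem LinearMap.IsProj.exists_finiteRank_subproj [CompleteSpace 𝕜] {Z B : Submodule 𝕜 E}
    {P : E →L[𝕜] E} (hP : LinearMap.IsProj Z P) (hBZ : B ≤ Z) (hB : IsClosed (B : Set E))
    [FiniteDimensional 𝕜 (Z ⧸ B.comap Z.subtype)] :
    ∃ κ : E →L[𝕜] E, κ ∘L κ = κ ∧ FiniteDimensional 𝕜 κ.range ∧ P ∘L κ = κ ∧ κ ∘L P = κ ∧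
      (∀ y ∈ B, κ y = 0) ∧ ∀ x, P x - κ x ∈ B := by
  obtain ⟨q, hqB, hq, hq_fin⟩ :=
    (B.comap Z.subtype).exists_proj_along_of_finiteDimensional_quotient
      (hB.preimage continuous_subtype_val)
  have hqq (m : Z) : q (q m) = q m := (sub_eq_zero.1 (by simpa using hqB _ (hq m))).symm
  let ρ : E →L[𝕜] Z := P.codRestrict Z hP.map_mem
  have hρ (z : E) (hz : z ∈ Z) : ρ z = ⟨z, hz⟩ := Subtype.ext (hP.map_id z hz)
  have hρP (x : E) : ρ (P x) = ρ x := Subtype.ext (hP.map_map x)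
  refine ⟨Z.subtypeL ∘L q ∘L ρ, ?_, ?_, ?_, ?_, fun y hy ↦ ?_, fun x ↦ hq (ρ x)⟩
  · ext x
    simp [hρ _ (q (ρ x)).2, hqq]
  · refine Submodule.finiteDimensional_of_le (?_ : _ ≤ q.range.map Z.subtype)
    rintro _ ⟨x, rfl⟩
    exact ⟨_, ⟨ρ x, rfl⟩, rfl⟩
  · ext x
    exact hP.map_id _ (q (ρ x)).2
  · ext x
    simp [hρP]
  · simp [hρ y (hBZ hy), hqB ⟨y, hBZ hy⟩ hy]

theorem ContinuousLinearMap.exists_range_section [CompleteSpace E] [CompleteSpace F]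
    (D : F →L[𝕜] E) (hD : IsClosed (D.range : Set E)) {P : F →L[𝕜] F}
    (hP : LinearMap.IsProj D.ker P) :
    ∃ s : D.range →L[𝕜] F, ∀ x, s ⟨D x, ⟨x, rfl⟩⟩ = x - P x := by
  let N := P.ker
  have : CompleteSpace N := P.isClosed_ker.completeSpace_coe
  have : CompleteSpace D.range := hD.completeSpace_coe
  have hN (x : F) : x - P x ∈ N := by simp [N, hP.map_map]
  have hDN (x : F) : D (x - P x) = D x := by
    have hDP : D (P x) = 0 := hP.map_mem x
    rw [map_sub, hDP, sub_zero]
  let T : N →L[𝕜] D.range := (D ∘L N.subtypeL).codRestrict D.range fun n ↦ ⟨n, rfl⟩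
  have hT (x : F) : T ⟨x - P x, hN x⟩ = ⟨D x, ⟨x, rfl⟩⟩ :=
    Subtype.ext (hDN x)
  have hinj : T.ker = ⊥ := by
    refine LinearMap.ker_eq_bot'.2 fun n hn ↦ ?_
    have hDn : D n = 0 := congrArg Subtype.val hn
    exact Subtype.ext ((hP.map_id n hDn).symm.trans n.2)
  have hsurj : T.range = ⊤ := by
    refine LinearMap.range_eq_top.2 fun ⟨y, x, hx⟩ ↦ ⟨⟨x - P x, hN x⟩, ?_⟩
    subst hx
    exact hT x
  let e := ContinuousLinearEquiv.ofBijective T hinj hsurj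
  refine ⟨N.subtypeL ∘L e.symm.toContinuousLinearMap, fun x ↦ ?_⟩
  rw [← hT x]
  exact congrArg Subtype.val (ContinuousLinearEquiv.ofBijective_symm_apply_apply T hinj hsurj _)

/-- Degree-wise data of a homotopy `dh + hd = 1 - κ`, relative to projections `P` onto the cycles
of `E` and `P'` onto `ker D`. -/
structure IsLocalHomotopy (D : F →L[𝕜] E) (P : E →L[𝕜] E) (P' : F →L[𝕜] F) (h : E →L[𝕜] F)
    (κ : E →L[𝕜] E) : Prop where
  d_comp_h : D ∘L h = P - κ
  h_comp_d : h ∘L D = .id 𝕜 F - P'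
  proj_comp_h : P' ∘L h = 0
  h_comp_proj : h ∘L P = h
  κ_comp_κ : κ ∘L κ = κ
  finiteDimensional_range : FiniteDimensional 𝕜 κ.range
  proj_comp_κ : P ∘L κ = κ
  κ_comp_proj : κ ∘L P = κ
  h_comp_κ : h ∘L κ = 0
  κ_comp_d : κ ∘L D = 0

theorem exists_isLocalHomotopy [CompleteSpace 𝕜] [CompleteSpace E] [CompleteSpace F]
    (D : F →L[𝕜] E) {Z : Submodule 𝕜 E} {P : E →L[𝕜] E} (hP : LinearMap.IsProj Z P)
    {P' : F →L[𝕜] F} (hP' : LinearMap.IsProj D.ker P') (hDZ : D.range ≤ Z)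
    (hD : IsClosed (D.range : Set E)) [FiniteDimensional 𝕜 (Z ⧸ D.range.comap Z.subtype)] :
    ∃ h κ, IsLocalHomotopy D P P' h κ := by
  obtain ⟨κ, hκκ, hκ_fin, hPκ, hκP, hκD, hPκD⟩ := hP.exists_finiteRank_subproj hDZ hD
  obtain ⟨s, hs⟩ := D.exists_range_section hD hP'
  have hrange (y : D.range) : ∃ x, y = ⟨D x, x, rfl⟩ :=
    let ⟨x, hx⟩ := y.2
    ⟨x, Subtype.ext hx.symm⟩
  have hDs (y : D.range) : D (s y) = y := by
    obtain ⟨x, rfl⟩ := hrange y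
    have hDP' : D (P' x) = 0 := hP'.map_mem x
    rw [hs, map_sub, hDP', sub_zero]
  have hP's (y : D.range) : P' (s y) = 0 := by
    obtain ⟨x, rfl⟩ := hrange y
    rw [hs, map_sub, hP'.map_map, sub_self]
  let π : E →L[𝕜] D.range := (P - κ).codRestrict D.range hPκD
  have hπD (x : F) : π (D x) = ⟨D x, x, rfl⟩ := by
    have hPD : P (D x) = D x := hP.map_id _ (hDZ ⟨x, rfl⟩)
    have hκD' : κ (D x) = 0 := hκD _ ⟨x, rfl⟩
    exact Subtype.ext (by simp [π, hPD, hκD'])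
  refine ⟨s ∘L π, κ, ?_, ?_, ?_, ?_, hκκ, hκ_fin, hPκ, hκP, ?_, ?_⟩
  · ext x
    exact hDs _
  · ext x
    simp [hπD, hs]
  · ext x
    exact hP's _
  · ext x
    have : π (P x) = π x := Subtype.ext (by simp [π, hP.map_map, ← comp_apply κ P, hκP])
    simp [this]
  · ext x
    have : π (κ x) = 0 :=
      Subtype.ext (by simp [π, ← comp_apply P κ, ← comp_apply κ κ, hPκ, hκκ])
    simp [this]
  · ext x
    exact hκD _ ⟨x, rfl⟩

namespace IsLocalHomotopy

variable {D : F →L[𝕜] E} {P : E →L[𝕜] E} {P' : F →L[𝕜] F} {h : E →L[𝕜] F} {κ : E →L[𝕜] E}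

theorem comp_κ_eq_zero (H : IsLocalHomotopy D P P' h κ) {A : E →L[𝕜] G} (hA : A ∘L P = 0) :
    A ∘L κ = 0 := by
  rw [← H.proj_comp_κ, ← comp_assoc, hA, zero_comp]

variable {D' : G →L[𝕜] F} {P'' : G →L[𝕜] G} {h' : F →L[𝕜] G} {κ' : F →L[𝕜] F}

theorem next_d_comp_h_add_h_comp_d (H : IsLocalHomotopy D P P' h κ)
    (H' : IsLocalHomotopy D' P' P'' h' κ') : D' ∘L h' + h ∘L D = .id 𝕜 F - κ' := by
  rw [H'.d_comp_h, H.h_comp_d]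
  abel

theorem next_h_comp_h (H : IsLocalHomotopy D P P' h κ) (H' : IsLocalHomotopy D' P' P'' h' κ') :
    h' ∘L h = 0 := by
  rw [← H'.h_comp_proj, comp_assoc, H.proj_comp_h, comp_zero]

theorem next_κ_comp_h (H : IsLocalHomotopy D P P' h κ) (H' : IsLocalHomotopy D' P' P'' h' κ') :
    κ' ∘L h = 0 := by
  rw [← H'.κ_comp_proj, comp_assoc, H.proj_comp_h, comp_zero]

end IsLocalHomotopy

end Banach

section Complex

variable {𝕜 : Type*} [NontriviallyNormedField 𝕜] {X : ℕ → Type*}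
  [∀ p, NormedAddCommGroup (X p)] [∀ p, NormedSpace 𝕜 (X p)]

def cycleProj (Q : ∀ p, X (p + 1) →L[𝕜] X (p + 1)) : ∀ p, X p →L[𝕜] X p
  | 0 => .id 𝕜 (X 0)
  | p + 1 => Q p

theorem exists_isLocalHomotopy_cycleProj [CompleteSpace 𝕜] [∀ p, CompleteSpace (X p)]
    (d : ∀ p, X (p + 1) →L[𝕜] X p) (k : ℕ) {Q : ∀ p, X (p + 1) →L[𝕜] X (p + 1)}
    (hQ : ∀ p ≤ k, LinearMap.IsProj (d p).ker (Q p)) (hcomplex : ∀ p, d p ∘L d (p + 1) = 0)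
    (hclosed : ∀ p ≤ k, IsClosed ((d p).range : Set (X p)))
    (hfc0 : FiniteDimensional 𝕜 (X 0 ⧸ (d 0).range))
    (hfc : ∀ p < k,
      FiniteDimensional 𝕜 ((d p).ker ⧸ (d (p + 1)).range.comap (d p).ker.subtype)) :
    ∀ p ≤ k, ∃ h κ, IsLocalHomotopy (d p) (cycleProj Q p) (cycleProj Q (p + 1)) h κ
  | 0, hk => by
    have := (d 0).range.finiteDimensional_quotient_comap_top_subtype
    exact exists_isLocalHomotopy (d 0) (Z := ⊤) ⟨fun _ ↦ trivial, fun _ _ ↦ rfl⟩ (hQ 0 hk) le_top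
      (hclosed 0 hk)
  | p + 1, hk => by
    have := hfc p hk
    refine exists_isLocalHomotopy (d (p + 1)) (hQ p (Nat.le_of_succ_le hk)) (hQ (p + 1) hk) ?_
      (hclosed (p + 1) hk)
    rintro _ ⟨x, rfl⟩
    exact DFunLike.congr_fun (hcomplex p) x

end Complex

theorem stmt11_general (k : ℕ)
    (X : ℕ → Type*) [∀ p, NormedAddCommGroup (X p)] [∀ p, NormedSpace ℂ (X p)]
    [∀ p, CompleteSpace (X p)]
    (d : ∀ p : ℕ, X (p + 1) →L[ℂ] X p)
    (hcomplex : ∀ p, (d p).comp (d (p + 1)) = 0)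
    (hclosed : ∀ p, p ≤ k → IsClosed (LinearMap.range (d p : X (p + 1) →ₗ[ℂ] X p) : Set (X p)))
    (hfc0 : FiniteDimensional ℂ (X 0 ⧸ LinearMap.range (d 0 : X (0 + 1) →ₗ[ℂ] X 0)))
    (hfc : ∀ p, p < k →
      FiniteDimensional ℂ
        (↥(LinearMap.ker (d p : X (p + 1) →ₗ[ℂ] X p)) ⧸
          Submodule.comap (LinearMap.ker (d p : X (p + 1) →ₗ[ℂ] X p)).subtype
            (LinearMap.range (d (p + 1) : X (p + 1 + 1) →ₗ[ℂ] X (p + 1)))))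
    (hcompl : ∀ p, p ≤ k → Submodule.ClosedComplemented (LinearMap.ker (d p : X (p + 1) →ₗ[ℂ] X p))) :
    ∃ (h : ∀ p : ℕ, X p →L[ℂ] X (p + 1)) (κ : ∀ p : ℕ, X p →L[ℂ] X p),
      (∀ p, p ≤ k → (κ p).comp (κ p) = κ p ∧
        FiniteDimensional ℂ (LinearMap.range (κ p : X p →ₗ[ℂ] X p))) ∧
      (d 0).comp (h 0) = ContinuousLinearMap.id ℂ (X 0) - κ 0 ∧
      (∀ p, p < k →
        (d (p + 1)).comp (h (p + 1)) + (h p).comp (d p) =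
          ContinuousLinearMap.id ℂ (X (p + 1)) - κ (p + 1)) ∧
      (∀ p, p < k → (h (p + 1)).comp (h p) = 0) ∧
      (∀ p, p ≤ k → (h p).comp (κ p) = 0) ∧
      (∀ p, p ≤ k → (κ p).comp (d p) = 0) ∧
      (∀ p, p < k → (d p).comp (κ (p + 1)) = 0) ∧
      (∀ p, p < k → (κ (p + 1)).comp (h p) = 0) := by
  choose! Q hQ using fun p (hp : p ≤ k) ↦ (hcompl p hp).exists_isProj
  choose! h κ H using exists_isLocalHomotopy_cycleProj d k hQ hcomplex hclosed hfc0 hfc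
  refine ⟨h, κ, fun p hp ↦ ⟨(H p hp).κ_comp_κ, (H p hp).finiteDimensional_range⟩,
    (H 0 k.zero_le).d_comp_h, fun p hp ↦ (H p hp.le).next_d_comp_h_add_h_comp_d (H (p + 1) hp),
    fun p hp ↦ (H p hp.le).next_h_comp_h (H (p + 1) hp), fun p hp ↦ (H p hp).h_comp_κ,
    fun p hp ↦ (H p hp).κ_comp_d, fun p hp ↦ (H (p + 1) hp).comp_κ_eq_zero ?_,
    fun p hp ↦ (H p hp.le).next_κ_comp_h (H (p + 1) hp)⟩
  ext x
  exact (hQ p hp.le).map_mem x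

/-- Let `0 → Xₙ → ⋯ → X₀ → 0` be a complex of complex Banach spaces and
bounded linear operators (here `d p : X (p+1) → X p` plays the role of `d_{p+1}`, with
`d p = 0` for `p ≥ n` encoding the conventions `d₀ = 0`, `d_{n+1} = 0`), and let
`0 ≤ k ≤ n`. Suppose that for `p = 0, …, k` the range of `d_{p+1}` is closed and of finite
codimension in `ker d_p` (for `p = 0`, `ker d₀ = X₀`), and that `ker d_p` admits a closed
topological complement for `p = 1, …, k+1`. Then there are bounded operators
`h_p : X_p → X_{p+1}` and bounded finite-rank projections `k_p : X_p → X_p`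
(`p = 0, …, k`) with (conventions `h₋₁ = 0`, `d₀ = 0`): `d_{p+1}∘h_p + h_{p-1}∘d_p = Id − k_p`,
`h_p∘h_{p-1} = 0`, `h_p∘k_p = 0`, `k_p∘d_{p+1} = 0`, `d_p∘k_p = 0` and `k_p∘h_{p-1} = 0`
for every `p = 0, …, k`. -/
theorem stmt11 (n k : ℕ) (hkn : k ≤ n)
    (X : ℕ → Type*) [∀ p, NormedAddCommGroup (X p)] [∀ p, NormedSpace ℂ (X p)]
    [∀ p, CompleteSpace (X p)]
    (d : ∀ p : ℕ, X (p + 1) →L[ℂ] X p)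
    (hcomplex : ∀ p, (d p).comp (d (p + 1)) = 0)
    (hzero : ∀ p, n ≤ p → d p = 0)
    (hclosed : ∀ p, p ≤ k → IsClosed (LinearMap.range (d p : X (p + 1) →ₗ[ℂ] X p) : Set (X p)))
    (hfc0 : FiniteDimensional ℂ (X 0 ⧸ LinearMap.range (d 0 : X (0 + 1) →ₗ[ℂ] X 0)))
    (hfc : ∀ p, p < k →
      FiniteDimensional ℂ
        (↥(LinearMap.ker (d p : X (p + 1) →ₗ[ℂ] X p)) ⧸
          Submodule.comap (LinearMap.ker (d p : X (p + 1) →ₗ[ℂ] X p)).subtype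
            (LinearMap.range (d (p + 1) : X (p + 1 + 1) →ₗ[ℂ] X (p + 1)))))
    (hcompl : ∀ p, p ≤ k → Submodule.ClosedComplemented (LinearMap.ker (d p : X (p + 1) →ₗ[ℂ] X p))) :
    ∃ (h : ∀ p : ℕ, X p →L[ℂ] X (p + 1)) (κ : ∀ p : ℕ, X p →L[ℂ] X p),
      (∀ p, p ≤ k → (κ p).comp (κ p) = κ p ∧
        FiniteDimensional ℂ (LinearMap.range (κ p : X p →ₗ[ℂ] X p))) ∧
      (d 0).comp (h 0) = ContinuousLinearMap.id ℂ (X 0) - κ 0 ∧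
      (∀ p, p < k →
        (d (p + 1)).comp (h (p + 1)) + (h p).comp (d p) =
          ContinuousLinearMap.id ℂ (X (p + 1)) - κ (p + 1)) ∧
      (∀ p, p < k → (h (p + 1)).comp (h p) = 0) ∧
      (∀ p, p ≤ k → (h p).comp (κ p) = 0) ∧
      (∀ p, p ≤ k → (κ p).comp (d p) = 0) ∧
      (∀ p, p < k → (d p).comp (κ (p + 1)) = 0) ∧
      (∀ p, p < k → (κ (p + 1)).comp (h p) = 0) :=
  stmt11_general k X d hcomplex hclosed hfc0 hfc hcompl
end
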